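/- Fix a probability measure q on an action space and a bounded measurable function Δ with |Δ| ≤ 2B under q. Sample A₁,…,A_K i.i.d. from q, and let u_k = S*(A_k), v_k = S(A_k) where S* and S are scores bounded by B so that Δ = S − S*. Then E[KL(softmax(u) ‖ softmax(v))] ≥ (e^{−2B}/2)·((K−1)/K)·Var_{A∼q}(Δ(A)). -/

import Mathlib

open MeasureTheory
open scoped BigOperators

noncomputable def softmax {K : ℕ} (z : Fin K → ℝ) : Fin K → ℝ :=
  fun k => Real.exp (z k) / ∑ j, Real.exp (z j)

noncomputable def klFin {K : ℕ} (p q : Fin K → ℝ) : ℝ :=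
  ∑ k, p k * Real.log (p k / q k)

/-!
Write `p = softmax u`, `q = softmax v`, `Δ = v - u`. Then `y_k = log (q_k / p_k) = Δ_k - c` for a
constant `c`, and `KL(p ‖ q) = ∑ p_k (e^{y_k} - 1 - y_k) ≥ ½ ∑ min(p_k, q_k) y_k²`. Every softmax
weight of a score vector bounded by `B` is at least `e^{-2B}/K`, and the mean minimises
`c ↦ ∑ (Δ_k - c)²`, so `KL ≥ e^{-2B}/(2K) ∑ (Δ_k - Δ̄)²` on every slate. For an i.i.d. slate the
expected sum of squared deviations from the sample mean is `(K - 1) Var Δ`.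
-/

open Finset ProbabilityTheory Real

lemma sq_div_two_le_one_sub_exp_add_mul_exp {x : ℝ} (hx : 0 ≤ x) :
    x ^ 2 / 2 ≤ 1 - exp x + x * exp x := by
  let g : ℝ → ℝ := fun t => 1 - exp t + t * exp t - t ^ 2 / 2
  have hg : ∀ t, HasDerivAt g (t * (exp t - 1)) t := by
    intro t
    refine ((((hasDerivAt_exp t).const_sub 1).add ((hasDerivAt_id' t).mul
      (hasDerivAt_exp t))).sub ((hasDerivAt_pow 2 t).div_const 2)).congr_deriv ?_
    norm_num
    ring
  have hmono : MonotoneOn g (Set.Ici 0) := by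
    refine monotoneOn_of_hasDerivWithinAt_nonneg (convex_Ici 0)
      (fun t _ => (hg t).continuousAt.continuousWithinAt) (fun t _ => (hg t).hasDerivWithinAt)
      fun t ht => ?_
    rw [interior_Ici, Set.mem_Ioi] at ht
    exact mul_nonneg ht.le (sub_nonneg.mpr (one_le_exp ht.le))
  have := hmono Set.self_mem_Ici hx hx
  simp only [g, exp_zero] at this
  linarith

lemma min_one_exp_mul_sq_div_two_le (y : ℝ) : min 1 (exp y) * y ^ 2 / 2 ≤ exp y - 1 - y := by
  rcases le_total 0 y with hy | hy
  · rw [min_eq_left (one_le_exp hy)]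
    linarith [quadratic_le_exp_of_nonneg hy]
  · rw [min_eq_right (exp_le_one_iff.mpr hy)]
    calc exp y * y ^ 2 / 2 = exp y * ((-y) ^ 2 / 2) := by ring
      _ ≤ exp y * (1 - exp (-y) + -y * exp (-y)) :=
        mul_le_mul_of_nonneg_left (sq_div_two_le_one_sub_exp_add_mul_exp (neg_nonneg.mpr hy))
          (exp_pos y).le
      _ = exp y - 1 - y := by rw [exp_neg]; field_simp; ring

lemma sum_min_mul_log_sq_div_two_le_klFin {K : ℕ} {p q : Fin K → ℝ} (hp : ∀ k, 0 < p k)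
    (hq : ∀ k, 0 < q k) (hpq : ∑ k, p k = ∑ k, q k) :
    ∑ k, min (p k) (q k) * log (q k / p k) ^ 2 / 2 ≤ klFin p q := by
  have hterm : ∀ k, min (p k) (q k) * log (q k / p k) ^ 2 / 2
      ≤ q k - p k + p k * log (p k / q k) := by
    intro k
    have hpk := (hp k).ne'
    have hmin : p k * min 1 (q k / p k) = min (p k) (q k) := by
      rw [mul_min_of_nonneg _ _ (hp k).le, mul_one, mul_div_cancel₀ _ hpk]
    have h := mul_le_mul_of_nonneg_left (min_one_exp_mul_sq_div_two_le (log (q k / p k))) (hp k).le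
    rw [exp_log (div_pos (hq k) (hp k))] at h
    rw [mul_sub, mul_sub, mul_div_cancel₀ _ hpk, mul_one] at h
    rw [← hmin, ← inv_div (q k) (p k), log_inv]
    linarith
  calc ∑ k, min (p k) (q k) * log (q k / p k) ^ 2 / 2
      ≤ ∑ k, (q k - p k + p k * log (p k / q k)) := sum_le_sum fun k _ => hterm k
    _ = klFin p q := by rw [sum_add_distrib, sum_sub_distrib, hpq, sub_self, zero_add, klFin]

lemma abs_klFin_le {K : ℕ} {p q : Fin K → ℝ} {δ : ℝ} (hδ : 0 < δ) (hp : ∀ k, δ ≤ p k)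
    (hq : ∀ k, δ ≤ q k) (hp1 : ∑ k, p k = 1) (hq1 : ∑ k, q k = 1) :
    |klFin p q| ≤ -log δ := by
  have hlog : ∀ r : Fin K → ℝ, (∀ k, δ ≤ r k) → ∑ k, r k = 1 →
      ∀ k, log δ ≤ log (r k) ∧ log (r k) ≤ 0 := by
    intro r hr hr1 k
    refine ⟨log_le_log hδ (hr k), log_nonpos (hδ.le.trans (hr k)) ?_⟩
    rw [← hr1]
    exact single_le_sum (fun j _ => hδ.le.trans (hr j)) (mem_univ k)
  have hpos : ∀ k, 0 < p k := fun k => hδ.trans_le (hp k)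
  calc |klFin p q| ≤ ∑ k, |p k * log (p k / q k)| := abs_sum_le_sum_abs _ _
    _ ≤ ∑ k, p k * (-log δ) := by
      refine sum_le_sum fun k _ => ?_
      rw [abs_mul, abs_of_pos (hpos k), log_div (hpos k).ne' (hδ.trans_le (hq k)).ne']
      have := hlog p hp hp1 k
      have := hlog q hq hq1 k
      exact mul_le_mul_of_nonneg_left (abs_sub_le_iff.mpr ⟨by linarith, by linarith⟩) (hpos k).le
    _ = -log δ := by rw [← sum_mul, hp1, one_mul]

lemma sum_sq_sub_eq_sum_sq_sub_mean_add {ι : Type*} [Fintype ι] (x : ι → ℝ) (c : ℝ) :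
    ∑ i, (x i - c) ^ 2
      = ∑ i, (x i - (∑ j, x j) / Fintype.card ι) ^ 2
        + Fintype.card ι * ((∑ j, x j) / Fintype.card ι - c) ^ 2 := by
  rcases isEmpty_or_nonempty ι with _ | _
  · simp
  have hn : (Fintype.card ι : ℝ) ≠ 0 := Nat.cast_ne_zero.mpr Fintype.card_ne_zero
  simp only [sub_sq, sum_add_distrib, sum_sub_distrib, ← mul_sum, ← sum_mul, sum_const,
    card_univ, nsmul_eq_mul]
  field_simp
  ring

section Softmax

variable {K : ℕ} [NeZero K]

lemma sum_exp_pos (z : Fin K → ℝ) : 0 < ∑ j, exp (z j) :=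
  sum_pos (fun _ _ => exp_pos _) univ_nonempty

lemma softmax_pos (z : Fin K → ℝ) (k : Fin K) : 0 < softmax z k :=
  div_pos (exp_pos _) (sum_exp_pos z)

lemma sum_softmax (z : Fin K → ℝ) : ∑ k, softmax z k = 1 := by
  simp only [softmax, ← sum_div, div_self (sum_exp_pos z).ne']

lemma exp_neg_two_mul_div_le_softmax {B : ℝ} {z : Fin K → ℝ} (hz : ∀ k, |z k| ≤ B)
    (k : Fin K) : exp (-(2 * B)) / K ≤ softmax z k := by
  have hZ : ∑ j, exp (z j) ≤ K * exp B :=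
    calc ∑ j, exp (z j) ≤ ∑ _j : Fin K, exp B :=
          sum_le_sum fun j _ => exp_le_exp.mpr (le_of_abs_le (hz j))
      _ = K * exp B := by simp
  rw [softmax, div_le_div_iff₀ (Nat.cast_pos.mpr (Nat.pos_of_neZero K)) (sum_exp_pos z)]
  calc exp (-(2 * B)) * ∑ j, exp (z j) ≤ exp (-(2 * B)) * (K * exp B) := by gcongr
    _ = exp (-B) * K := by rw [mul_left_comm, ← exp_add]; ring_nf
    _ ≤ exp (z k) * K := by gcongr; exact neg_le_of_abs_le (hz k)

lemma log_softmax_div_softmax (u v : Fin K → ℝ) (k : Fin K) :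
    log (softmax v k / softmax u k)
      = v k - u k - log ((∑ j, exp (v j)) / ∑ j, exp (u j)) := by
  simp only [softmax]
  rw [div_div_div_comm, log_div (by positivity) (div_pos (sum_exp_pos v) (sum_exp_pos u)).ne',
    div_eq_mul_inv, ← exp_neg, ← exp_add, log_exp]
  ring

end Softmax

lemma exp_neg_two_mul_div_mul_sum_sq_le_klFin_softmax {K : ℕ} [NeZero K] {B : ℝ}
    {u v : Fin K → ℝ} (hu : ∀ k, |u k| ≤ B) (hv : ∀ k, |v k| ≤ B) :
    exp (-(2 * B)) / (2 * K) * ∑ k, (v k - u k - (∑ j, (v j - u j)) / K) ^ 2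
      ≤ klFin (softmax u) (softmax v) := by
  set δ := exp (-(2 * B)) / K
  set c := log ((∑ j, exp (v j)) / ∑ j, exp (u j))
  have hmean : ∑ k, (v k - u k - (∑ j, (v j - u j)) / K) ^ 2 ≤ ∑ k, (v k - u k - c) ^ 2 := by
    rw [sum_sq_sub_eq_sum_sq_sub_mean_add (fun k => v k - u k) c, Fintype.card_fin]
    exact le_add_of_nonneg_right (by positivity)
  calc exp (-(2 * B)) / (2 * K) * ∑ k, (v k - u k - (∑ j, (v j - u j)) / K) ^ 2
      ≤ ∑ k, δ * (v k - u k - c) ^ 2 / 2 := by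
        rw [← sum_div, ← mul_sum, show exp (-(2 * B)) / (2 * K) = δ / 2 by ring]
        linarith [mul_le_mul_of_nonneg_left hmean (by positivity : 0 ≤ δ)]
    _ ≤ ∑ k, min (softmax u k) (softmax v k) * log (softmax v k / softmax u k) ^ 2 / 2 := by
        refine sum_le_sum fun k _ => ?_
        rw [log_softmax_div_softmax]
        gcongr
        exact le_min (exp_neg_two_mul_div_le_softmax hu k) (exp_neg_two_mul_div_le_softmax hv k)
    _ ≤ klFin (softmax u) (softmax v) :=
        sum_min_mul_log_sq_div_two_le_klFin (softmax_pos u) (softmax_pos v)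
          (by rw [sum_softmax, sum_softmax])

lemma integrable_klFin_softmax {Ω : Type*} [MeasurableSpace Ω] {μ : Measure Ω}
    [IsFiniteMeasure μ] {K : ℕ} [NeZero K] {B : ℝ} {u v : Ω → Fin K → ℝ} (hu : Measurable u)
    (hv : Measurable v) (hub : ∀ ω k, |u ω k| ≤ B) (hvb : ∀ ω k, |v ω k| ≤ B) :
    Integrable (fun ω => klFin (softmax (u ω)) (softmax (v ω))) μ := by
  have hmeas : Measurable fun ω => klFin (softmax (u ω)) (softmax (v ω)) := by
    unfold klFin softmax
    fun_prop
  exact .of_bound hmeas.aestronglyMeasurable _ (ae_of_all _ fun ω =>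
    abs_klFin_le (div_pos (exp_pos _) (Nat.cast_pos.mpr (Nat.pos_of_neZero K)))
      (exp_neg_two_mul_div_le_softmax (hub ω))
      (exp_neg_two_mul_div_le_softmax (hvb ω)) (sum_softmax _) (sum_softmax _))

lemma integral_sum_sq_sub_mean_pi {α ι : Type*} [MeasurableSpace α] [Fintype ι] [Nonempty ι]
    {μ : Measure α} [IsProbabilityMeasure μ] {f : α → ℝ} (hf : MemLp f 2 μ) :
    ∫ ω, ∑ i, (f (ω i) - (∑ j, f (ω j)) / Fintype.card ι) ^ 2 ∂(Measure.pi fun _ : ι => μ)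
      = (Fintype.card ι - 1) * Var[f; μ] := by
  set n : ℝ := (Fintype.card ι : ℝ)
  set P := Measure.pi fun _ : ι => μ
  have hn : n ≠ 0 := Nat.cast_ne_zero.mpr Fintype.card_ne_zero
  have hcomp : ∀ i (g : α → ℝ), AEStronglyMeasurable g μ → ∫ ω, g (ω i) ∂P = ∫ a, g a ∂μ :=
    fun i g hg => integral_comp_eval (μ := fun _ => μ) (i := i) hg
  have hX : ∀ i, MemLp (fun ω : ι → α => f (ω i)) 2 P :=
    fun i => hf.comp_measurePreserving (measurePreserving_eval _ i)
  have hS : MemLp (fun ω : ι → α => ∑ i, f (ω i)) 2 P := memLp_finsetSum _ fun i _ => hX i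
  have hVarS : Var[fun ω : ι → α => ∑ i, f (ω i); P] = n * Var[f; μ] := by
    rw [← nsmul_eq_mul, ← card_univ, ← sum_const, ← variance_sum_pi fun _ => hf]
    congr 1
    ext ω
    simp only [Finset.sum_apply]
  have hES : ∫ ω, ∑ i, f (ω i) ∂P = n * ∫ a, f a ∂μ := by
    rw [integral_finsetSum _ fun i _ => (hX i).integrable one_le_two]
    simp only [hcomp _ _ hf.aestronglyMeasurable, sum_const, card_univ, nsmul_eq_mul, n]
  have hESq : ∫ ω, ∑ i, f (ω i) ^ 2 ∂P = n * ∫ a, f a ^ 2 ∂μ := by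
    rw [integral_finsetSum _ fun i _ => (hX i).integrable_sq]
    simp only [hcomp _ (fun a => f a ^ 2) (hf.aestronglyMeasurable.pow 2), sum_const, card_univ,
      nsmul_eq_mul, n]
  have hpt : ∀ ω : ι → α, ∑ i, (f (ω i) - (∑ j, f (ω j)) / n) ^ 2
      = ∑ i, f (ω i) ^ 2 - (∑ i, f (ω i)) ^ 2 / n := by
    intro ω
    have := sum_sq_sub_eq_sum_sq_sub_mean_add (fun i => f (ω i)) 0
    simp only [sub_zero] at this
    rw [this]
    field_simp
    ring
  simp_rw [hpt]
  rw [integral_sub (integrable_finsetSum _ fun i _ => (hX i).integrable_sq)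
    (hS.integrable_sq.div_const n), integral_div, hESq]
  rw [variance_eq_sub hS, hES] at hVarS
  rw [variance_eq_sub hf] at hVarS ⊢
  simp only [Pi.pow_apply] at hVarS ⊢
  rw [sub_eq_iff_eq_add] at hVarS
  rw [hVarS]
  field_simp
  ring

theorem stmt_5_general {α : Type*} [MeasurableSpace α] (q : Measure α) [IsProbabilityMeasure q]
    {K : ℕ} (hK : 2 ≤ K) (B : ℝ)
    (Sstar S : α → ℝ) (hSstar : Measurable Sstar) (hS : Measurable S)
    (hbS : ∀ a, |Sstar a| ≤ B) (hbS' : ∀ a, |S a| ≤ B) :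
    (Real.exp (-(2 * B)) / 2) * (((K : ℝ) - 1) / (K : ℝ)) *
        (∫ a, (S a - Sstar a) ^ 2 ∂q - (∫ a, (S a - Sstar a) ∂q) ^ 2)
      ≤ ∫ A, klFin (softmax (fun k => Sstar (A k))) (softmax (fun k => S (A k)))
          ∂(Measure.pi fun _ : Fin K => q) := by
  have : NeZero K := ⟨by omega⟩
  have hΔ : MemLp (fun a => S a - Sstar a) 2 q :=
    .of_bound (hS.sub hSstar).aestronglyMeasurable (2 * B) (ae_of_all _ fun a => by
      rw [Real.norm_eq_abs]
      linarith [abs_sub (S a) (Sstar a), hbS a, hbS' a])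
  have hvar := integral_sum_sq_sub_mean_pi (ι := Fin K) hΔ
  rw [Fintype.card_fin, variance_eq_sub hΔ] at hvar
  have hKL_int := integrable_klFin_softmax (μ := Measure.pi fun _ : Fin K => q)
    (u := fun A k => Sstar (A k)) (v := fun A k => S (A k)) (by fun_prop) (by fun_prop)
    (fun A k => hbS (A k)) (fun A k => hbS' (A k))
  calc (exp (-(2 * B)) / 2) * (((K : ℝ) - 1) / (K : ℝ)) *
        (∫ a, (S a - Sstar a) ^ 2 ∂q - (∫ a, (S a - Sstar a) ∂q) ^ 2)
      = ∫ A, exp (-(2 * B)) / (2 * K) * ∑ k, (S (A k) - Sstar (A k)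
          - (∑ j, (S (A j) - Sstar (A j))) / K) ^ 2 ∂(Measure.pi fun _ : Fin K => q) := by
        rw [integral_const_mul, hvar]
        simp only [Pi.pow_apply]
        field_simp
    _ ≤ _ := integral_mono_of_nonneg (ae_of_all _ fun A => by positivity) hKL_int
        (ae_of_all _ fun A => exp_neg_two_mul_div_mul_sum_sq_le_klFin_softmax
          (fun k => hbS (A k)) (fun k => hbS' (A k)))

theorem stmt_5 {α : Type*} [MeasurableSpace α] (q : Measure α) [IsProbabilityMeasure q]
    {K : ℕ} (hK : 2 ≤ K) (B : ℝ) (hB : 0 ≤ B)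
    (Sstar S : α → ℝ) (hSstar : Measurable Sstar) (hS : Measurable S)
    (hbS : ∀ a, |Sstar a| ≤ B) (hbS' : ∀ a, |S a| ≤ B) :
    (Real.exp (-(2 * B)) / 2) * (((K : ℝ) - 1) / (K : ℝ)) *
        (∫ a, (S a - Sstar a) ^ 2 ∂q - (∫ a, (S a - Sstar a) ∂q) ^ 2)
      ≤ ∫ A, klFin (softmax (fun k => Sstar (A k))) (softmax (fun k => S (A k)))
          ∂(Measure.pi fun _ : Fin K => q) :=
  stmt_5_general q hK B Sstar S hSstar hS hbS hbS'
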